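/- arXiv:2410.02409 — 2 statements merged into one kernel-verified Lean document; each statement's English description precedes it below -/
import Mathlib

section
/- Let ℓ, m be integers with 1 ≤ ℓ < m, and let t_{ℓ,m} : ℕ → ℕ be the (ℓ,m)-Thue–Morse word, defined by t_{ℓ,m}(n) = v(t₃(n)) where t₃(n) = (sum of the base-3 digits of n) mod 3 and v(0) = 0, v(1) = ℓ, v(2) = m (equivalently, t_{ℓ,m} is the fixed point starting with 0 of the morphism 0→0ℓm, ℓ→ℓm0, m→m0ℓ). Then its abelian complexity satisfies ρ^{ab}_{t_{ℓ,m}}(0) = 1, ρ^{ab}_{t_{ℓ,m}}(1) = 3, ρ^{ab}_{t_{ℓ,m}}(2) = 6, and for all n ≥ 1: ρ^{ab}_{t_{ℓ,m}}(3n) = 7, ρ^{ab}_{t_{ℓ,m}}(3n+1) = 6, and ρ^{ab}_{t_{ℓ,m}}(3n+2) = 6. -/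
/-- Sum of the letters of the length-`n` factor of `x` starting at position `i`. -/
def blockSum (x : ℕ → ℕ) (i n : ℕ) : ℕ := ∑ j ∈ Finset.range n, x (i + j)

/-- Additive complexity: the number of distinct letter-sums of length-`n` factors. -/
noncomputable def addComplexity (x : ℕ → ℕ) (n : ℕ) : ℕ :=
  Set.ncard {s : ℕ | ∃ i : ℕ, blockSum x i n = s}

/-- Parikh vector of the length-`n` factor of `x` starting at position `i`. -/
def parikh (x : ℕ → ℕ) (i n : ℕ) : ℕ → ℕ :=
  fun a => ((Finset.range n).filter fun j => x (i + j) = a).card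

/-- Abelian complexity: the number of distinct Parikh vectors of length-`n` factors. -/
noncomputable def abComplexity (x : ℕ → ℕ) (n : ℕ) : ℕ :=
  Set.ncard {P : ℕ → ℕ | ∃ i : ℕ, parikh x i n = P}

/-- `x` is the fixed point of the morphism `f` starting with the letter `a₀`:
`x 0 = a₀` and `x` is the infinite concatenation `f (x 0) f (x 1) f (x 2) ⋯`. -/
def IsFixedPointOf (f : ℕ → List ℕ) (a₀ : ℕ) (x : ℕ → ℕ) : Prop :=
  x 0 = a₀ ∧ ∀ n j, j < (f (x n)).length →
    x ((∑ k ∈ Finset.range n, (f (x k)).length) + j) = (f (x n)).getD j 0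

/-- The ternary Thue–Morse word: the base-3 digit sum, reduced mod 3. -/
def t3 (n : ℕ) : ℕ := (Nat.digits 3 n).sum % 3

/-- The (ℓ,m)-Thue–Morse word: the ternary Thue–Morse word with letters 1, 2 renamed
to ℓ, m respectively. -/
def tlm (l m : ℕ) (n : ℕ) : ℕ :=
  if t3 n = 0 then 0 else if t3 n = 1 then l else m

section AuxLM
set_option maxHeartbeats 1000000
set_option linter.all false

lemma t3_lt (n : ℕ) : t3 n < 3 := Nat.mod_lt _ (by norm_num)

lemma t3_m0 (n : ℕ) : t3 (3*n) = t3 n := by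
  rcases Nat.eq_zero_or_pos n with h | h
  · simp [h]
  · unfold t3
    rw [Nat.digits_def' (by norm_num : (1:ℕ) < 3) (by omega)]
    have h1 : (3*n) % 3 = 0 := by omega
    have h2 : (3*n) / 3 = n := by omega
    rw [h1, h2]
    simp

lemma t3_m1 (n : ℕ) : t3 (3*n+1) = (t3 n + 1) % 3 := by
  unfold t3
  rw [Nat.digits_def' (by norm_num : (1:ℕ) < 3) (by omega)]
  have h1 : (3*n+1) % 3 = 1 := by omega
  have h2 : (3*n+1) / 3 = n := by omega
  rw [h1, h2]
  simp [Nat.add_mod, Nat.add_comm]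

lemma t3_m2 (n : ℕ) : t3 (3*n+2) = (t3 n + 2) % 3 := by
  unfold t3
  rw [Nat.digits_def' (by norm_num : (1:ℕ) < 3) (by omega)]
  have h1 : (3*n+2) % 3 = 2 := by omega
  have h2 : (3*n+2) / 3 = n := by omega
  rw [h1, h2]
  simp [Nat.add_mod, Nat.add_comm]

lemma pair1 (a b : ℕ) (ha : a < 3) (hb : b < 3) : ∃ u, t3 u = a ∧ t3 (u+1) = b := by
  interval_cases a <;> interval_cases b
  · exact ⟨44, by norm_num [t3, Nat.digits_def'], by norm_num [t3, Nat.digits_def']⟩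
  · exact ⟨0, by norm_num [t3], by norm_num [t3, Nat.digits_def']⟩
  · exact ⟨5, by norm_num [t3, Nat.digits_def'], by norm_num [t3, Nat.digits_def']⟩
  · exact ⟨14, by norm_num [t3, Nat.digits_def'], by norm_num [t3, Nat.digits_def']⟩
  · exact ⟨8, by norm_num [t3, Nat.digits_def'], by norm_num [t3, Nat.digits_def']⟩
  · exact ⟨1, by norm_num [t3, Nat.digits_def'], by norm_num [t3, Nat.digits_def']⟩
  · exact ⟨4, by norm_num [t3, Nat.digits_def'], by norm_num [t3, Nat.digits_def']⟩
  · exact ⟨2, by norm_num [t3, Nat.digits_def'], by norm_num [t3, Nat.digits_def']⟩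
  · exact ⟨17, by norm_num [t3, Nat.digits_def'], by norm_num [t3, Nat.digits_def']⟩

lemma pair_surj : ∀ q, 1 ≤ q → ∀ a b, a < 3 → b < 3 → ∃ u, t3 u = a ∧ t3 (u + q) = b := by
  intro q
  induction q using Nat.strong_induction_on with
  | _ q IH =>
    intro hq a b ha hb
    rcases Nat.lt_or_ge q 2 with h2 | h2
    · have : q = 1 := by omega
      subst this
      exact pair1 a b ha hb
    have hrlt : q % 3 < 3 := Nat.mod_lt q (by norm_num)
    interval_cases hr : q % 3
    · -- q = 3 q'
      set q' := q / 3 with hq'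
      have hq3 : q = 3 * q' := by omega
      obtain ⟨u, hu1, hu2⟩ := IH q' (by omega) (by omega) a b ha hb
      exact ⟨3*u, by rw [t3_m0]; exact hu1, by rw [show 3*u + q = 3*(u + q') from by omega, t3_m0]; exact hu2⟩
    · -- q = 3 q' + 1, q' ≥ 1
      set q' := q / 3 with hq'
      have hq3 : q = 3 * q' + 1 := by omega
      obtain ⟨u, hu1, hu2⟩ := IH q' (by omega) (by omega) a ((b+2) % 3) ha (by omega)
      refine ⟨3*u, by rw [t3_m0]; exact hu1, ?_⟩
      rw [show 3*u + q = 3*(u + q') + 1 from by omega, t3_m1, hu2]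
      omega
    · -- q = 3 q' + 2
      set q' := q / 3 with hq'
      have hq3 : q = 3 * q' + 2 := by omega
      obtain ⟨u, hu1, hu2⟩ := IH (q'+1) (by omega) (by omega) ((a+2) % 3) b (by omega) hb
      refine ⟨3*u+1, ?_, ?_⟩
      · rw [t3_m1, hu1]; omega
      · rw [show 3*u + 1 + q = 3*(u + (q'+1)) from by omega, t3_m0]; exact hu2

def cnt (c N : ℕ) : ℕ := ((Finset.range N).filter fun j => t3 j = c).card

lemma cnt_succ (c N : ℕ) : cnt c (N+1) = cnt c N + if t3 N = c then 1 else 0 := by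
  unfold cnt
  rw [Finset.range_add_one, Finset.filter_insert]
  split_ifs with h
  · rw [Finset.card_insert_of_notMem (by simp)]
  · simp

lemma cnt_m0 (c : ℕ) (hc : c < 3) (v : ℕ) : cnt c (3*v) = v := by
  induction v with
  | zero => simp [cnt]
  | succ v ih =>
    have e : 3*(v+1) = (3*v+1)+1+1 := by ring
    rw [e, cnt_succ, cnt_succ, show 3*v+1 = (3*v)+1 from rfl, cnt_succ, ih]
    rw [show (3*v)+1 = 3*v+1 from rfl, t3_m0, t3_m1, t3_m2]
    have := t3_lt v
    interval_cases h : t3 v <;> interval_cases c <;> norm_num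

lemma cnt_m1 (c : ℕ) (hc : c < 3) (v : ℕ) :
    cnt c (3*v+1) = v + if t3 v = c then 1 else 0 := by
  rw [show 3*v+1 = (3*v)+1 from rfl, cnt_succ, cnt_m0 c hc, t3_m0]

lemma cnt_m2 (c : ℕ) (hc : c < 3) (v : ℕ) :
    cnt c (3*v+2) = v + ((if t3 v = c then 1 else 0) + (if (t3 v + 1) % 3 = c then 1 else 0)) := by
  rw [show 3*v+2 = (3*v+1)+1 from rfl, cnt_succ, cnt_m1 c hc, t3_m1]
  ring

lemma parikh_split (i n c : ℕ) : parikh t3 i n c + cnt c i = cnt c (i + n) := by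
  induction n with
  | zero => simp [parikh, cnt]
  | succ n ih =>
    rw [show i + (n+1) = (i+n)+1 from rfl, cnt_succ, ← ih]
    unfold parikh
    rw [Finset.range_add_one, Finset.filter_insert]
    split_ifs with h
    · rw [Finset.card_insert_of_notMem (by simp)]; ring
    · ring

lemma eqA0 (u q c : ℕ) (hc : c < 3) : parikh t3 (3*u) (3*q) c = q := by
  have h := parikh_split (3*u) (3*q) c
  rw [cnt_m0 c hc, show 3*u+3*q = 3*(u+q) from by ring, cnt_m0 c hc] at h
  omega

lemma eqA1 (u q c : ℕ) (hc : c < 3) :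
    parikh t3 (3*u+1) (3*q) c + (if t3 u = c then 1 else 0)
      = q + (if t3 (u+q) = c then 1 else 0) := by
  have h := parikh_split (3*u+1) (3*q) c
  rw [cnt_m1 c hc, show 3*u+1+3*q = 3*(u+q)+1 from by ring, cnt_m1 c hc] at h
  split_ifs at h ⊢ <;> omega

lemma eqA2 (u q c : ℕ) (hc : c < 3) :
    parikh t3 (3*u+2) (3*q) c + ((if t3 u = c then 1 else 0) + (if (t3 u + 1) % 3 = c then 1 else 0))
      = q + ((if t3 (u+q) = c then 1 else 0) + (if (t3 (u+q) + 1) % 3 = c then 1 else 0)) := by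
  have h := parikh_split (3*u+2) (3*q) c
  rw [cnt_m2 c hc, show 3*u+2+3*q = 3*(u+q)+2 from by ring, cnt_m2 c hc] at h
  split_ifs at h ⊢ <;> omega

lemma eqB0 (u q c : ℕ) (hc : c < 3) :
    parikh t3 (3*u) (3*q+1) c = q + (if t3 (u+q) = c then 1 else 0) := by
  have h := parikh_split (3*u) (3*q+1) c
  rw [cnt_m0 c hc, show 3*u+(3*q+1) = 3*(u+q)+1 from by ring, cnt_m1 c hc] at h
  split_ifs at h ⊢ <;> omega

lemma eqB1 (u q c : ℕ) (hc : c < 3) :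
    parikh t3 (3*u+1) (3*q+1) c + (if t3 u = c then 1 else 0)
      = q + ((if t3 (u+q) = c then 1 else 0) + (if (t3 (u+q) + 1) % 3 = c then 1 else 0)) := by
  have h := parikh_split (3*u+1) (3*q+1) c
  rw [cnt_m1 c hc, show 3*u+1+(3*q+1) = 3*(u+q)+2 from by ring, cnt_m2 c hc] at h
  split_ifs at h ⊢ <;> omega

lemma eqB2 (u q c : ℕ) (hc : c < 3) :
    parikh t3 (3*u+2) (3*q+1) c
        + ((if t3 u = c then 1 else 0) + (if (t3 u + 1) % 3 = c then 1 else 0))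
      = q + 1 := by
  have h := parikh_split (3*u+2) (3*q+1) c
  rw [cnt_m2 c hc, show 3*u+2+(3*q+1) = 3*(u+q+1) from by ring, cnt_m0 c hc] at h
  split_ifs at h ⊢ <;> omega

lemma eqC0 (u q c : ℕ) (hc : c < 3) :
    parikh t3 (3*u) (3*q+2) c
      = q + ((if t3 (u+q) = c then 1 else 0) + (if (t3 (u+q) + 1) % 3 = c then 1 else 0)) := by
  have h := parikh_split (3*u) (3*q+2) c
  rw [cnt_m0 c hc, show 3*u+(3*q+2) = 3*(u+q)+2 from by ring, cnt_m2 c hc] at h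
  split_ifs at h ⊢ <;> omega

lemma eqC1 (u q c : ℕ) (hc : c < 3) :
    parikh t3 (3*u+1) (3*q+2) c + (if t3 u = c then 1 else 0) = q + 1 := by
  have h := parikh_split (3*u+1) (3*q+2) c
  rw [cnt_m1 c hc, show 3*u+1+(3*q+2) = 3*(u+q+1) from by ring, cnt_m0 c hc] at h
  split_ifs at h ⊢ <;> omega

lemma eqC2 (u q c : ℕ) (hc : c < 3) :
    parikh t3 (3*u+2) (3*q+2) c
        + ((if t3 u = c then 1 else 0) + (if (t3 u + 1) % 3 = c then 1 else 0))
      = q + 1 + (if t3 (u+q+1) = c then 1 else 0) := by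
  have h := parikh_split (3*u+2) (3*q+2) c
  rw [cnt_m2 c hc, show 3*u+2+(3*q+2) = 3*(u+q+1)+1 from by ring, cnt_m1 c hc] at h
  split_ifs at h ⊢ <;> omega

lemma esum (a c : ℕ) (ha : a < 3) (hc : c < 3) :
    (if a = c then 1 else 0) + (if (a+1) % 3 = c then 1 else 0)
      + (if (a+2) % 3 = c then 1 else 0) = 1 := by
  interval_cases a <;> interval_cases c <;> decide

def trip (i n : ℕ) : ℕ × ℕ × ℕ := (parikh t3 i n 0, parikh t3 i n 1, parikh t3 i n 2)

lemma mem7 (p x0 x1 x2 a b : ℕ) (ha : a < 3) (hb : b < 3)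
    (h0 : x0 + (if a = 0 then 1 else 0) = (p+1) + (if b = 0 then 1 else 0))
    (h1 : x1 + (if a = 1 then 1 else 0) = (p+1) + (if b = 1 then 1 else 0))
    (h2 : x2 + (if a = 2 then 1 else 0) = (p+1) + (if b = 2 then 1 else 0)) :
    (x0,x1,x2) ∈ ({(p+1,p+1,p+1), (p+2,p,p+1), (p+2,p+1,p), (p,p+2,p+1), (p+1,p+2,p),
       (p,p+1,p+2), (p+1,p,p+2)} : Set (ℕ×ℕ×ℕ)) := by
  simp only [Set.mem_insert_iff, Set.mem_singleton_iff, Prod.mk.injEq]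
  interval_cases a <;> interval_cases b <;> simp at h0 h1 h2 <;> omega

lemma memE1 (p x0 x1 x2 a b : ℕ) (ha : a < 3) (hb : b < 3)
    (h0 : x0 + ((if a = 0 then 1 else 0) + (if b = 0 then 1 else 0)) = p+2)
    (h1 : x1 + ((if a = 1 then 1 else 0) + (if b = 1 then 1 else 0)) = p+2)
    (h2 : x2 + ((if a = 2 then 1 else 0) + (if b = 2 then 1 else 0)) = p+2) :
    (x0,x1,x2) ∈ ({(p+2,p+1,p+1),(p+1,p+2,p+1),(p+1,p+1,p+2),(p,p+2,p+2),(p+2,p,p+2),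
       (p+2,p+2,p)} : Set (ℕ×ℕ×ℕ)) := by
  simp only [Set.mem_insert_iff, Set.mem_singleton_iff, Prod.mk.injEq]
  interval_cases a <;> interval_cases b <;> simp at h0 h1 h2 <;> omega

lemma memE2 (q x0 x1 x2 a b : ℕ) (ha : a < 3) (hb : b < 3)
    (h0 : x0 = q + ((if a = 0 then 1 else 0) + (if b = 0 then 1 else 0)))
    (h1 : x1 = q + ((if a = 1 then 1 else 0) + (if b = 1 then 1 else 0)))
    (h2 : x2 = q + ((if a = 2 then 1 else 0) + (if b = 2 then 1 else 0))) :
    (x0,x1,x2) ∈ ({(q,q+1,q+1),(q+1,q,q+1),(q+1,q+1,q),(q+2,q,q),(q,q+2,q),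
       (q,q,q+2)} : Set (ℕ×ℕ×ℕ)) := by
  simp only [Set.mem_insert_iff, Set.mem_singleton_iff, Prod.mk.injEq]
  interval_cases a <;> interval_cases b <;> simp at h0 h1 h2 <;> omega

lemma memE0 (x0 x1 x2 d : ℕ) (hd : d < 3)
    (h0 : x0 = (if d = 0 then 1 else 0))
    (h1 : x1 = (if d = 1 then 1 else 0))
    (h2 : x2 = (if d = 2 then 1 else 0)) :
    (x0,x1,x2) ∈ ({(1,0,0),(0,1,0),(0,0,1)} : Set (ℕ×ℕ×ℕ)) := by
  simp only [Set.mem_insert_iff, Set.mem_singleton_iff, Prod.mk.injEq]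
  interval_cases d <;> simp at h0 h1 h2 <;> omega


lemma T3 (p : ℕ) :
    {t : ℕ × ℕ × ℕ | ∃ i, trip i (3*(p+1)) = t} =
      {(p+1,p+1,p+1), (p+2,p,p+1), (p+2,p+1,p), (p,p+2,p+1), (p+1,p+2,p),
       (p,p+1,p+2), (p+1,p,p+2)} := by
  ext t
  simp only [Set.mem_setOf_eq]
  constructor
  · rintro ⟨i, rfl⟩
    have hmod : i % 3 < 3 := Nat.mod_lt i (by norm_num)
    have hdm := Nat.div_add_mod i 3
    set u := i / 3 with hu
    have ha := t3_lt u
    have hb := t3_lt (u+(p+1))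
    unfold trip
    interval_cases hr : i % 3
    · rw [show i = 3*u from by omega, eqA0 u (p+1) 0 (by norm_num),
        eqA0 u (p+1) 1 (by norm_num), eqA0 u (p+1) 2 (by norm_num)]
      exact Set.mem_insert _ _
    · rw [show i = 3*u+1 from by omega]
      exact mem7 p _ _ _ (t3 u) (t3 (u+(p+1))) ha hb
        (eqA1 u (p+1) 0 (by norm_num)) (eqA1 u (p+1) 1 (by norm_num))
        (eqA1 u (p+1) 2 (by norm_num))
    · rw [show i = 3*u+2 from by omega]
      refine mem7 p _ _ _ ((t3 (u+(p+1))+2) % 3) ((t3 u+2) % 3) (by omega) (by omega) ?_ ?_ ?_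
      · have h := eqA2 u (p+1) 0 (by norm_num)
        have e1 := esum (t3 u) 0 ha (by norm_num)
        have e2 := esum (t3 (u+(p+1))) 0 hb (by norm_num)
        omega
      · have h := eqA2 u (p+1) 1 (by norm_num)
        have e1 := esum (t3 u) 1 ha (by norm_num)
        have e2 := esum (t3 (u+(p+1))) 1 hb (by norm_num)
        omega
      · have h := eqA2 u (p+1) 2 (by norm_num)
        have e1 := esum (t3 u) 2 ha (by norm_num)
        have e2 := esum (t3 (u+(p+1))) 2 hb (by norm_num)
        omega
  · have W : ∀ a b : ℕ, a < 3 → b < 3 → ∃ i, ∀ c, c < 3 →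
        parikh t3 i (3*(p+1)) c + (if a = c then 1 else 0)
          = (p+1) + (if b = c then 1 else 0) := by
      intro a b ha hb
      obtain ⟨u, hu1, hu2⟩ := pair_surj (p+1) (by omega) a b ha hb
      refine ⟨3*u+1, fun c hc => ?_⟩
      have h := eqA1 u (p+1) c hc
      rw [hu1, hu2] at h
      exact h
    have G : ∀ a b : ℕ, a < 3 → b < 3 → ∀ y0 y1 y2 : ℕ,
        (y0 + (if a = 0 then 1 else 0) = (p+1) + (if b = 0 then 1 else 0)) →
        (y1 + (if a = 1 then 1 else 0) = (p+1) + (if b = 1 then 1 else 0)) →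
        (y2 + (if a = 2 then 1 else 0) = (p+1) + (if b = 2 then 1 else 0)) →
        ∃ i, trip i (3*(p+1)) = (y0, y1, y2) → True := fun _ _ _ _ _ _ _ _ _ _ => ⟨0, fun _ => trivial⟩
    clear G
    rintro (rfl | rfl | rfl | rfl | rfl | rfl | rfl)
    · exact ⟨3*0, by unfold trip; rw [eqA0 0 (p+1) 0 (by norm_num), eqA0 0 (p+1) 1 (by norm_num),
        eqA0 0 (p+1) 2 (by norm_num)]⟩
    · obtain ⟨i, hi⟩ := W 1 0 (by norm_num) (by norm_num)
      refine ⟨i, ?_⟩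
      have h0 := hi 0 (by norm_num); have h1 := hi 1 (by norm_num); have h2 := hi 2 (by norm_num)
      norm_num at h0 h1 h2
      unfold trip
      simp only [Prod.mk.injEq]
      omega
    · obtain ⟨i, hi⟩ := W 2 0 (by norm_num) (by norm_num)
      refine ⟨i, ?_⟩
      have h0 := hi 0 (by norm_num); have h1 := hi 1 (by norm_num); have h2 := hi 2 (by norm_num)
      norm_num at h0 h1 h2
      unfold trip
      simp only [Prod.mk.injEq]
      omega
    · obtain ⟨i, hi⟩ := W 0 1 (by norm_num) (by norm_num)
      refine ⟨i, ?_⟩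
      have h0 := hi 0 (by norm_num); have h1 := hi 1 (by norm_num); have h2 := hi 2 (by norm_num)
      norm_num at h0 h1 h2
      unfold trip
      simp only [Prod.mk.injEq]
      omega
    · obtain ⟨i, hi⟩ := W 2 1 (by norm_num) (by norm_num)
      refine ⟨i, ?_⟩
      have h0 := hi 0 (by norm_num); have h1 := hi 1 (by norm_num); have h2 := hi 2 (by norm_num)
      norm_num at h0 h1 h2
      unfold trip
      simp only [Prod.mk.injEq]
      omega
    · obtain ⟨i, hi⟩ := W 0 2 (by norm_num) (by norm_num)
      refine ⟨i, ?_⟩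
      have h0 := hi 0 (by norm_num); have h1 := hi 1 (by norm_num); have h2 := hi 2 (by norm_num)
      norm_num at h0 h1 h2
      unfold trip
      simp only [Prod.mk.injEq]
      omega
    · obtain ⟨i, hi⟩ := W 1 2 (by norm_num) (by norm_num)
      refine ⟨i, ?_⟩
      have h0 := hi 0 (by norm_num); have h1 := hi 1 (by norm_num); have h2 := hi 2 (by norm_num)
      norm_num at h0 h1 h2
      unfold trip
      simp only [Prod.mk.injEq]
      omega

lemma T1 (p : ℕ) :
    {t : ℕ × ℕ × ℕ | ∃ i, trip i (3*(p+1)+1) = t} =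
      {(p+2,p+1,p+1),(p+1,p+2,p+1),(p+1,p+1,p+2),(p,p+2,p+2),(p+2,p,p+2),(p+2,p+2,p)} := by
  ext t
  simp only [Set.mem_setOf_eq]
  constructor
  · rintro ⟨i, rfl⟩
    have hmod : i % 3 < 3 := Nat.mod_lt i (by norm_num)
    have hdm := Nat.div_add_mod i 3
    set u := i / 3 with hu
    have ha := t3_lt u
    have hb := t3_lt (u+(p+1))
    unfold trip
    interval_cases hr : i % 3
    · rw [show i = 3*u from by omega]
      refine memE1 p _ _ _ ((t3 (u+(p+1))+1) % 3) ((t3 (u+(p+1))+2) % 3) (by omega) (by omega)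
        ?_ ?_ ?_
      · have h := eqB0 u (p+1) 0 (by norm_num)
        have e2 := esum (t3 (u+(p+1))) 0 hb (by norm_num)
        omega
      · have h := eqB0 u (p+1) 1 (by norm_num)
        have e2 := esum (t3 (u+(p+1))) 1 hb (by norm_num)
        omega
      · have h := eqB0 u (p+1) 2 (by norm_num)
        have e2 := esum (t3 (u+(p+1))) 2 hb (by norm_num)
        omega
    · rw [show i = 3*u+1 from by omega]
      refine memE1 p _ _ _ (t3 u) ((t3 (u+(p+1))+2) % 3) ha (by omega) ?_ ?_ ?_
      · have h := eqB1 u (p+1) 0 (by norm_num)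
        have e2 := esum (t3 (u+(p+1))) 0 hb (by norm_num)
        omega
      · have h := eqB1 u (p+1) 1 (by norm_num)
        have e2 := esum (t3 (u+(p+1))) 1 hb (by norm_num)
        omega
      · have h := eqB1 u (p+1) 2 (by norm_num)
        have e2 := esum (t3 (u+(p+1))) 2 hb (by norm_num)
        omega
    · rw [show i = 3*u+2 from by omega]
      refine memE1 p _ _ _ (t3 u) ((t3 u+1) % 3) ha (by omega) ?_ ?_ ?_
      · have h := eqB2 u (p+1) 0 (by norm_num); omega
      · have h := eqB2 u (p+1) 1 (by norm_num); omega
      · have h := eqB2 u (p+1) 2 (by norm_num); omega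
  · rintro (rfl | rfl | rfl | rfl | rfl | rfl)
    · obtain ⟨u, hu1, hu2⟩ := pair_surj (p+1) (by omega) 0 0 (by norm_num) (by norm_num)
      refine ⟨3*u, ?_⟩
      have h0 := eqB0 u (p+1) 0 (by norm_num); have h1 := eqB0 u (p+1) 1 (by norm_num)
      have h2 := eqB0 u (p+1) 2 (by norm_num)
      rw [hu2] at h0 h1 h2
      norm_num at h0 h1 h2
      unfold trip
      simp only [Prod.mk.injEq]
      omega
    · obtain ⟨u, hu1, hu2⟩ := pair_surj (p+1) (by omega) 0 1 (by norm_num) (by norm_num)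
      refine ⟨3*u, ?_⟩
      have h0 := eqB0 u (p+1) 0 (by norm_num); have h1 := eqB0 u (p+1) 1 (by norm_num)
      have h2 := eqB0 u (p+1) 2 (by norm_num)
      rw [hu2] at h0 h1 h2
      norm_num at h0 h1 h2
      unfold trip
      simp only [Prod.mk.injEq]
      omega
    · obtain ⟨u, hu1, hu2⟩ := pair_surj (p+1) (by omega) 0 2 (by norm_num) (by norm_num)
      refine ⟨3*u, ?_⟩
      have h0 := eqB0 u (p+1) 0 (by norm_num); have h1 := eqB0 u (p+1) 1 (by norm_num)
      have h2 := eqB0 u (p+1) 2 (by norm_num)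
      rw [hu2] at h0 h1 h2
      norm_num at h0 h1 h2
      unfold trip
      simp only [Prod.mk.injEq]
      omega
    · obtain ⟨u, hu1, hu2⟩ := pair_surj (p+1) (by omega) 0 1 (by norm_num) (by norm_num)
      refine ⟨3*u+1, ?_⟩
      have h0 := eqB1 u (p+1) 0 (by norm_num); have h1 := eqB1 u (p+1) 1 (by norm_num)
      have h2 := eqB1 u (p+1) 2 (by norm_num)
      rw [hu1, hu2] at h0 h1 h2
      norm_num at h0 h1 h2
      unfold trip
      simp only [Prod.mk.injEq]
      omega
    · obtain ⟨u, hu1, hu2⟩ := pair_surj (p+1) (by omega) 1 2 (by norm_num) (by norm_num)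
      refine ⟨3*u+1, ?_⟩
      have h0 := eqB1 u (p+1) 0 (by norm_num); have h1 := eqB1 u (p+1) 1 (by norm_num)
      have h2 := eqB1 u (p+1) 2 (by norm_num)
      rw [hu1, hu2] at h0 h1 h2
      norm_num at h0 h1 h2
      unfold trip
      simp only [Prod.mk.injEq]
      omega
    · obtain ⟨u, hu1, hu2⟩ := pair_surj (p+1) (by omega) 2 0 (by norm_num) (by norm_num)
      refine ⟨3*u+1, ?_⟩
      have h0 := eqB1 u (p+1) 0 (by norm_num); have h1 := eqB1 u (p+1) 1 (by norm_num)
      have h2 := eqB1 u (p+1) 2 (by norm_num)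
      rw [hu1, hu2] at h0 h1 h2
      norm_num at h0 h1 h2
      unfold trip
      simp only [Prod.mk.injEq]
      omega

lemma T2 (q : ℕ) :
    {t : ℕ × ℕ × ℕ | ∃ i, trip i (3*q+2) = t} =
      {(q,q+1,q+1),(q+1,q,q+1),(q+1,q+1,q),(q+2,q,q),(q,q+2,q),(q,q,q+2)} := by
  ext t
  simp only [Set.mem_setOf_eq]
  constructor
  · rintro ⟨i, rfl⟩
    have hmod : i % 3 < 3 := Nat.mod_lt i (by norm_num)
    have hdm := Nat.div_add_mod i 3
    set u := i / 3 with hu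
    have ha := t3_lt u
    have hb := t3_lt (u+q)
    have hb1 := t3_lt (u+q+1)
    unfold trip
    interval_cases hr : i % 3
    · rw [show i = 3*u from by omega]
      exact memE2 q _ _ _ (t3 (u+q)) ((t3 (u+q)+1) % 3) hb (by omega)
        (eqC0 u q 0 (by norm_num)) (eqC0 u q 1 (by norm_num)) (eqC0 u q 2 (by norm_num))
    · rw [show i = 3*u+1 from by omega]
      refine memE2 q _ _ _ ((t3 u+1) % 3) ((t3 u+2) % 3) (by omega) (by omega) ?_ ?_ ?_
      · have h := eqC1 u q 0 (by norm_num)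
        have e1 := esum (t3 u) 0 ha (by norm_num)
        omega
      · have h := eqC1 u q 1 (by norm_num)
        have e1 := esum (t3 u) 1 ha (by norm_num)
        omega
      · have h := eqC1 u q 2 (by norm_num)
        have e1 := esum (t3 u) 2 ha (by norm_num)
        omega
    · rw [show i = 3*u+2 from by omega]
      refine memE2 q _ _ _ ((t3 u+2) % 3) (t3 (u+q+1)) (by omega) hb1 ?_ ?_ ?_
      · have h := eqC2 u q 0 (by norm_num)
        have e1 := esum (t3 u) 0 ha (by norm_num)
        omega
      · have h := eqC2 u q 1 (by norm_num)
        have e1 := esum (t3 u) 1 ha (by norm_num)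
        omega
      · have h := eqC2 u q 2 (by norm_num)
        have e1 := esum (t3 u) 2 ha (by norm_num)
        omega
  · rintro (rfl | rfl | rfl | rfl | rfl | rfl)
    · obtain ⟨u, hu1, hu2⟩ := pair_surj 1 (by norm_num) 0 0 (by norm_num) (by norm_num)
      refine ⟨3*u+1, ?_⟩
      have h0 := eqC1 u q 0 (by norm_num); have h1 := eqC1 u q 1 (by norm_num)
      have h2 := eqC1 u q 2 (by norm_num)
      rw [hu1] at h0 h1 h2
      norm_num at h0 h1 h2
      unfold trip
      simp only [Prod.mk.injEq]
      omega
    · obtain ⟨u, hu1, hu2⟩ := pair_surj 1 (by norm_num) 1 0 (by norm_num) (by norm_num)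
      refine ⟨3*u+1, ?_⟩
      have h0 := eqC1 u q 0 (by norm_num); have h1 := eqC1 u q 1 (by norm_num)
      have h2 := eqC1 u q 2 (by norm_num)
      rw [hu1] at h0 h1 h2
      norm_num at h0 h1 h2
      unfold trip
      simp only [Prod.mk.injEq]
      omega
    · obtain ⟨u, hu1, hu2⟩ := pair_surj 1 (by norm_num) 2 0 (by norm_num) (by norm_num)
      refine ⟨3*u+1, ?_⟩
      have h0 := eqC1 u q 0 (by norm_num); have h1 := eqC1 u q 1 (by norm_num)
      have h2 := eqC1 u q 2 (by norm_num)
      rw [hu1] at h0 h1 h2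
      norm_num at h0 h1 h2
      unfold trip
      simp only [Prod.mk.injEq]
      omega
    · obtain ⟨u, hu1, hu2⟩ := pair_surj (q+1) (by omega) 1 0 (by norm_num) (by norm_num)
      refine ⟨3*u+2, ?_⟩
      have h0 := eqC2 u q 0 (by norm_num); have h1 := eqC2 u q 1 (by norm_num)
      have h2 := eqC2 u q 2 (by norm_num)
      rw [show u + q + 1 = u + (q+1) from by ring, hu1, hu2] at h0 h1 h2
      norm_num at h0 h1 h2
      unfold trip
      simp only [Prod.mk.injEq]
      omega
    · obtain ⟨u, hu1, hu2⟩ := pair_surj (q+1) (by omega) 2 1 (by norm_num) (by norm_num)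
      refine ⟨3*u+2, ?_⟩
      have h0 := eqC2 u q 0 (by norm_num); have h1 := eqC2 u q 1 (by norm_num)
      have h2 := eqC2 u q 2 (by norm_num)
      rw [show u + q + 1 = u + (q+1) from by ring, hu1, hu2] at h0 h1 h2
      norm_num at h0 h1 h2
      unfold trip
      simp only [Prod.mk.injEq]
      omega
    · obtain ⟨u, hu1, hu2⟩ := pair_surj (q+1) (by omega) 0 2 (by norm_num) (by norm_num)
      refine ⟨3*u+2, ?_⟩
      have h0 := eqC2 u q 0 (by norm_num); have h1 := eqC2 u q 1 (by norm_num)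
      have h2 := eqC2 u q 2 (by norm_num)
      rw [show u + q + 1 = u + (q+1) from by ring, hu1, hu2] at h0 h1 h2
      norm_num at h0 h1 h2
      unfold trip
      simp only [Prod.mk.injEq]
      omega

lemma T01 :
    {t : ℕ × ℕ × ℕ | ∃ i, trip i 1 = t} = {(1,0,0),(0,1,0),(0,0,1)} := by
  ext t
  simp only [Set.mem_setOf_eq]
  constructor
  · rintro ⟨i, rfl⟩
    have hmod : i % 3 < 3 := Nat.mod_lt i (by norm_num)
    have hdm := Nat.div_add_mod i 3
    set u := i / 3 with hu
    have ha := t3_lt u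
    unfold trip
    interval_cases hr : i % 3
    · rw [show i = 3*u from by omega]
      have h0 := eqB0 u 0 0 (by norm_num); have h1 := eqB0 u 0 1 (by norm_num)
      have h2 := eqB0 u 0 2 (by norm_num)
      norm_num at h0 h1 h2
      refine memE0 _ _ _ (t3 u) ha ?_ ?_ ?_ <;> omega
    · rw [show i = 3*u+1 from by omega]
      have h0 := eqB1 u 0 0 (by norm_num); have h1 := eqB1 u 0 1 (by norm_num)
      have h2 := eqB1 u 0 2 (by norm_num)
      norm_num at h0 h1 h2
      refine memE0 _ _ _ ((t3 u + 1) % 3) (by omega) ?_ ?_ ?_ <;> omega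
    · rw [show i = 3*u+2 from by omega]
      have h0 := eqB2 u 0 0 (by norm_num); have h1 := eqB2 u 0 1 (by norm_num)
      have h2 := eqB2 u 0 2 (by norm_num)
      have e0 := esum (t3 u) 0 ha (by norm_num)
      have e1 := esum (t3 u) 1 ha (by norm_num)
      have e2 := esum (t3 u) 2 ha (by norm_num)
      norm_num at h0 h1 h2
      refine memE0 _ _ _ ((t3 u + 2) % 3) (by omega) ?_ ?_ ?_ <;> omega
  · rintro (rfl | rfl | rfl)
    · refine ⟨0, ?_⟩
      have h0 := eqB0 0 0 0 (by norm_num); have h1 := eqB0 0 0 1 (by norm_num)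
      have h2 := eqB0 0 0 2 (by norm_num)
      have ht : t3 0 = 0 := by norm_num [t3]
      rw [ht] at h0 h1 h2
      norm_num at h0 h1 h2
      unfold trip
      simp only [Prod.mk.injEq]
      omega
    · refine ⟨3, ?_⟩
      have h0 := eqB0 1 0 0 (by norm_num); have h1 := eqB0 1 0 1 (by norm_num)
      have h2 := eqB0 1 0 2 (by norm_num)
      have ht : t3 1 = 1 := by norm_num [t3, Nat.digits_def']
      rw [ht] at h0 h1 h2
      norm_num at h0 h1 h2
      unfold trip
      simp only [Prod.mk.injEq]
      omega
    · refine ⟨6, ?_⟩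
      have h0 := eqB0 2 0 0 (by norm_num); have h1 := eqB0 2 0 1 (by norm_num)
      have h2 := eqB0 2 0 2 (by norm_num)
      have ht : t3 2 = 2 := by norm_num [t3, Nat.digits_def']
      rw [ht] at h0 h1 h2
      norm_num at h0 h1 h2
      unfold trip
      simp only [Prod.mk.injEq]
      omega

lemma ncard7 (p : ℕ) :
    ({(p+1,p+1,p+1), (p+2,p,p+1), (p+2,p+1,p), (p,p+2,p+1), (p+1,p+2,p),
      (p,p+1,p+2), (p+1,p,p+2)} : Set (ℕ×ℕ×ℕ)).ncard = 7 := by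
  rw [Set.ncard_insert_of_notMem (by
        simp only [Set.mem_insert_iff, Set.mem_singleton_iff, Prod.mk.injEq, not_or]; omega),
      Set.ncard_insert_of_notMem (by
        simp only [Set.mem_insert_iff, Set.mem_singleton_iff, Prod.mk.injEq, not_or]; omega),
      Set.ncard_insert_of_notMem (by
        simp only [Set.mem_insert_iff, Set.mem_singleton_iff, Prod.mk.injEq, not_or]; omega),
      Set.ncard_insert_of_notMem (by
        simp only [Set.mem_insert_iff, Set.mem_singleton_iff, Prod.mk.injEq, not_or]; omega),
      Set.ncard_insert_of_notMem (by
        simp only [Set.mem_insert_iff, Set.mem_singleton_iff, Prod.mk.injEq, not_or]; omega),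
      Set.ncard_insert_of_notMem (by
        simp only [Set.mem_singleton_iff, Prod.mk.injEq, not_or]; omega),
      Set.ncard_singleton]

lemma ncard6E1 (p : ℕ) :
    ({(p+2,p+1,p+1),(p+1,p+2,p+1),(p+1,p+1,p+2),(p,p+2,p+2),(p+2,p,p+2),
      (p+2,p+2,p)} : Set (ℕ×ℕ×ℕ)).ncard = 6 := by
  rw [Set.ncard_insert_of_notMem (by
        simp only [Set.mem_insert_iff, Set.mem_singleton_iff, Prod.mk.injEq, not_or]; omega),
      Set.ncard_insert_of_notMem (by
        simp only [Set.mem_insert_iff, Set.mem_singleton_iff, Prod.mk.injEq, not_or]; omega),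
      Set.ncard_insert_of_notMem (by
        simp only [Set.mem_insert_iff, Set.mem_singleton_iff, Prod.mk.injEq, not_or]; omega),
      Set.ncard_insert_of_notMem (by
        simp only [Set.mem_insert_iff, Set.mem_singleton_iff, Prod.mk.injEq, not_or]; omega),
      Set.ncard_insert_of_notMem (by
        simp only [Set.mem_singleton_iff, Prod.mk.injEq, not_or]; omega),
      Set.ncard_singleton]

lemma ncard6E2 (q : ℕ) :
    ({(q,q+1,q+1),(q+1,q,q+1),(q+1,q+1,q),(q+2,q,q),(q,q+2,q),
      (q,q,q+2)} : Set (ℕ×ℕ×ℕ)).ncard = 6 := by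
  rw [Set.ncard_insert_of_notMem (by
        simp only [Set.mem_insert_iff, Set.mem_singleton_iff, Prod.mk.injEq, not_or]; omega),
      Set.ncard_insert_of_notMem (by
        simp only [Set.mem_insert_iff, Set.mem_singleton_iff, Prod.mk.injEq, not_or]; omega),
      Set.ncard_insert_of_notMem (by
        simp only [Set.mem_insert_iff, Set.mem_singleton_iff, Prod.mk.injEq, not_or]; omega),
      Set.ncard_insert_of_notMem (by
        simp only [Set.mem_insert_iff, Set.mem_singleton_iff, Prod.mk.injEq, not_or]; omega),
      Set.ncard_insert_of_notMem (by
        simp only [Set.mem_singleton_iff, Prod.mk.injEq, not_or]; omega),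
      Set.ncard_singleton]

lemma ncard3E0 :
    ({(1,0,0),(0,1,0),(0,0,1)} : Set (ℕ×ℕ×ℕ)).ncard = 3 := by
  rw [Set.ncard_insert_of_notMem (by
        simp only [Set.mem_insert_iff, Set.mem_singleton_iff, Prod.mk.injEq, not_or]; omega),
      Set.ncard_insert_of_notMem (by
        simp only [Set.mem_singleton_iff, Prod.mk.injEq, not_or]; omega),
      Set.ncard_singleton]

def Fv (l m : ℕ) (t : ℕ × ℕ × ℕ) : ℕ → ℕ :=
  fun a => if a = 0 then t.1 else if a = l then t.2.1 else if a = m then t.2.2 else 0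

lemma tlm_iff0 (l m : ℕ) (hl : 1 ≤ l) (hlm : l < m) :
    ∀ v, tlm l m v = 0 ↔ t3 v = 0 := by
  intro v
  unfold tlm
  split_ifs with h1 h2 <;> simp_all <;> omega

lemma tlm_iff1 (l m : ℕ) (hl : 1 ≤ l) (hlm : l < m) :
    ∀ v, tlm l m v = l ↔ t3 v = 1 := by
  intro v
  unfold tlm
  split_ifs with h1 h2 <;> simp_all <;> omega

lemma tlm_iff2 (l m : ℕ) (hl : 1 ≤ l) (hlm : l < m) :
    ∀ v, tlm l m v = m ↔ t3 v = 2 := by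
  intro v
  have := t3_lt v
  unfold tlm
  split_ifs with h1 h2 <;> constructor <;> intro h <;> omega

lemma tlm_vals (l m v : ℕ) : tlm l m v = 0 ∨ tlm l m v = l ∨ tlm l m v = m := by
  unfold tlm
  split_ifs <;> simp

lemma parikh_tlm (l m : ℕ) (hl : 1 ≤ l) (hlm : l < m) (i n : ℕ) :
    parikh (tlm l m) i n = Fv l m (trip i n) := by
  funext a
  unfold Fv trip
  by_cases h0 : a = 0
  · subst h0
    rw [if_pos rfl]
    unfold parikh
    simp only [tlm_iff0 l m hl hlm]
  · rw [if_neg h0]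
    by_cases h1 : a = l
    · rw [if_pos h1, h1]
      unfold parikh
      simp only [tlm_iff1 l m hl hlm]
    · rw [if_neg h1]
      by_cases h2 : a = m
      · rw [if_pos h2, h2]
        unfold parikh
        simp only [tlm_iff2 l m hl hlm]
      · rw [if_neg h2]
        unfold parikh
        rw [Finset.card_eq_zero, Finset.filter_eq_empty_iff]
        intro j _
        rcases tlm_vals l m (i+j) with h | h | h <;> omega

lemma Fv_inj (l m : ℕ) (hl : 1 ≤ l) (hlm : l < m) : Function.Injective (Fv l m) := by
  intro s t h
  have e1 : ¬ (l = 0) := by omega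
  have e2 : ¬ (m = 0) := by omega
  have e3 : ¬ (m = l) := by omega
  have h0 := congrFun h 0
  have h1 := congrFun h l
  have h2 := congrFun h m
  simp [Fv, e1, e2, e3] at h0 h1 h2
  exact Prod.ext h0 (Prod.ext h1 h2)

lemma ab_trip (l m : ℕ) (hl : 1 ≤ l) (hlm : l < m) (n : ℕ) :
    abComplexity (tlm l m) n = {t : ℕ × ℕ × ℕ | ∃ i, trip i n = t}.ncard := by
  unfold abComplexity
  have himg : {P : ℕ → ℕ | ∃ i : ℕ, parikh (tlm l m) i n = P}
      = Fv l m '' {t : ℕ × ℕ × ℕ | ∃ i, trip i n = t} := by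
    ext P
    simp only [Set.mem_setOf_eq, Set.mem_image]
    constructor
    · rintro ⟨i, rfl⟩
      exact ⟨trip i n, ⟨i, rfl⟩, (parikh_tlm l m hl hlm i n).symm⟩
    · rintro ⟨t, ⟨i, rfl⟩, rfl⟩
      exact ⟨i, parikh_tlm l m hl hlm i n⟩
  rw [himg, Set.ncard_image_of_injective _ (Fv_inj l m hl hlm)]

lemma ab0 (x : ℕ → ℕ) : abComplexity x 0 = 1 := by
  unfold abComplexity
  have hs : {P : ℕ → ℕ | ∃ i : ℕ, parikh x i 0 = P} = {fun _ => 0} := by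
    ext P
    simp only [Set.mem_setOf_eq, Set.mem_singleton_iff]
    constructor
    · rintro ⟨i, rfl⟩
      funext a
      simp [parikh]
    · rintro rfl
      exact ⟨0, by funext a; simp [parikh]⟩
  rw [hs, Set.ncard_singleton]



end AuxLM

/-- The abelian complexity of the (ℓ,m)-Thue–Morse word is 1 3 6 (7 6 6)^ω. -/
theorem lm_thue_morse_abelian_complexity (l m : ℕ) (hl : 1 ≤ l) (hlm : l < m) :
    abComplexity (tlm l m) 0 = 1 ∧ abComplexity (tlm l m) 1 = 3 ∧
    abComplexity (tlm l m) 2 = 6 ∧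
    ∀ n, 1 ≤ n →
      abComplexity (tlm l m) (3 * n) = 7 ∧
      abComplexity (tlm l m) (3 * n + 1) = 6 ∧
      abComplexity (tlm l m) (3 * n + 2) = 6 := by
  refine ⟨ab0 _, ?_, ?_, fun n hn => ⟨?_, ?_, ?_⟩⟩
  · rw [ab_trip l m hl hlm 1, T01, ncard3E0]
  · rw [ab_trip l m hl hlm 2, show (2:ℕ) = 3*0+2 from by norm_num, T2 0, ncard6E2 0]
  · rw [ab_trip l m hl hlm, show 3*n = 3*((n-1)+1) from by omega, T3 (n-1), ncard7]
  · rw [ab_trip l m hl hlm, show 3*n+1 = 3*((n-1)+1)+1 from by omega, T1 (n-1), ncard6E1]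
  · rw [ab_trip l m hl hlm, T2 n, ncard6E2]
end

section
/- Let λ ≥ 5 be an integer and let vtm_λ : ℕ → ℕ be the fixed point starting with 0 of the morphism f_λ on the alphabet {0, 1, λ} given by 0→01λ, 1→0λ, λ→1. Then the additive and abelian complexities of vtm_λ coincide: ρ⁺_{vtm_λ}(n) = ρ^{ab}_{vtm_λ}(n) for all n ≥ 0. -/
/-- The morphism 0→01λ, 1→0λ, λ→1 on the alphabet {0, 1, λ}. -/
def vtmLamMorphism (lam : ℕ) : ℕ → List ℕ :=
  fun a => if a = 0 then [0, 1, lam] else if a = 1 then [0, lam] else [1]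

-- aux
def vtmL (lam : ℕ) (x : ℕ → ℕ) (n : ℕ) : ℕ :=
  ∑ k ∈ Finset.range n, (vtmLamMorphism lam (x k)).length

lemma vtm_len_pos (lam a : ℕ) : 1 ≤ (vtmLamMorphism lam a).length := by
  unfold vtmLamMorphism; split_ifs <;> simp

lemma vtmL_succ (lam : ℕ) (x : ℕ → ℕ) (n : ℕ) :
    vtmL lam x (n+1) = vtmL lam x n + (vtmLamMorphism lam (x n)).length :=
  Finset.sum_range_succ _ _

lemma vtmL_zero (lam : ℕ) (x : ℕ → ℕ) : vtmL lam x 0 = 0 := rfl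

lemma vtm_cover (lam : ℕ) (x : ℕ → ℕ) (m : ℕ) :
    ∃ n, vtmL lam x n ≤ m ∧ m < vtmL lam x (n+1) := by
  induction m with
  | zero =>
    exact ⟨0, by simp [vtmL_zero], by rw [vtmL_succ, vtmL_zero]; have := vtm_len_pos lam (x 0); omega⟩
  | succ m ih =>
    obtain ⟨n, h1, h2⟩ := ih
    by_cases h : m + 1 < vtmL lam x (n+1)
    · exact ⟨n, by omega, h⟩
    · refine ⟨n+1, by omega, ?_⟩
      rw [vtmL_succ lam x (n+1)]
      have := vtm_len_pos lam (x (n+1))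
      omega

lemma parikh_zero (x : ℕ → ℕ) (i a : ℕ) : parikh x i 0 a = 0 := by simp [parikh]

lemma parikh_succ (x : ℕ → ℕ) (i n a : ℕ) :
    parikh x i (n+1) a = parikh x i n a + (if x (i+n) = a then 1 else 0) := by
  unfold parikh
  rw [Finset.range_add_one, Finset.filter_insert]
  split_ifs with h
  · rw [Finset.card_insert_of_notMem (by simp)]
  · simp

lemma parikh_add (x : ℕ → ℕ) (i n m a : ℕ) :
    parikh x i (n + m) a = parikh x i n a + parikh x (i + n) m a := by
  induction m with
  | zero => simp [parikh_zero]
  | succ m ih =>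
    rw [show n + (m+1) = (n+m)+1 from rfl, parikh_succ, ih, parikh_succ,
      show i + (n + m) = i + n + m by omega]
    omega

section Main
variable {lam : ℕ} {x : ℕ → ℕ}

lemma vtm_letter (hx : IsFixedPointOf (vtmLamMorphism lam) 0 x) (n j : ℕ)
    (hj : j < (vtmLamMorphism lam (x n)).length) :
    x (vtmL lam x n + j) = (vtmLamMorphism lam (x n)).getD j 0 :=
  hx.2 n j hj

lemma vtm_block (hlam : 5 ≤ lam) (hx : IsFixedPointOf (vtmLamMorphism lam) 0 x) (n j : ℕ)
    (hj : j ≤ (vtmLamMorphism lam (x n)).length) :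
    (parikh x (vtmL lam x n) j lam ≤ parikh x (vtmL lam x n) j 0 ∧
     parikh x (vtmL lam x n) j 0 ≤ parikh x (vtmL lam x n) j lam + 1) ∧
    (j = (vtmLamMorphism lam (x n)).length →
      parikh x (vtmL lam x n) j 0 = parikh x (vtmL lam x n) j lam) := by
  have hl0 : lam ≠ 0 := by omega
  have hl1 : lam ≠ 1 := by omega
  by_cases h0 : x n = 0
  · have len3 : (vtmLamMorphism lam (x n)).length = 3 := by simp [vtmLamMorphism, h0]
    have e0 : x (vtmL lam x n) = 0 := by
      have := vtm_letter hx n 0 (by omega); simpa [vtmLamMorphism, h0] using this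
    have e1 : x (vtmL lam x n + 1) = 1 := by
      have := vtm_letter hx n 1 (by omega); simpa [vtmLamMorphism, h0] using this
    have e2 : x (vtmL lam x n + 2) = lam := by
      have := vtm_letter hx n 2 (by omega); simpa [vtmLamMorphism, h0] using this
    rw [len3] at hj ⊢
    interval_cases j <;>
      simp [parikh_succ, parikh_zero, e0, e1, e2, hl0, hl1, Ne.symm hl0, Ne.symm hl1]
  · by_cases h1 : x n = 1
    · have len2 : (vtmLamMorphism lam (x n)).length = 2 := by simp [vtmLamMorphism, h0, h1]
      have e0 : x (vtmL lam x n) = 0 := by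
        have := vtm_letter hx n 0 (by omega); simpa [vtmLamMorphism, h0, h1] using this
      have e1 : x (vtmL lam x n + 1) = lam := by
        have := vtm_letter hx n 1 (by omega); simpa [vtmLamMorphism, h0, h1] using this
      rw [len2] at hj ⊢
      interval_cases j <;>
        simp [parikh_succ, parikh_zero, e0, e1, hl0, hl1, Ne.symm hl0, Ne.symm hl1]
    · have len1 : (vtmLamMorphism lam (x n)).length = 1 := by simp [vtmLamMorphism, h0, h1]
      have e0 : x (vtmL lam x n) = 1 := by
        have := vtm_letter hx n 0 (by omega); simpa [vtmLamMorphism, h0, h1] using this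
      rw [len1] at hj ⊢
      interval_cases j <;>
        simp [parikh_succ, parikh_zero, e0, hl0, hl1, Ne.symm hl0, Ne.symm hl1]

lemma vtm_eqL (hlam : 5 ≤ lam) (hx : IsFixedPointOf (vtmLamMorphism lam) 0 x) (n : ℕ) :
    parikh x 0 (vtmL lam x n) 0 = parikh x 0 (vtmL lam x n) lam := by
  induction n with
  | zero => simp [vtmL_zero, parikh_zero]
  | succ n ih =>
    rw [vtmL_succ, parikh_add, parikh_add]
    have := (vtm_block hlam hx n _ le_rfl).2 rfl
    simp only [Nat.zero_add] at *
    omega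

lemma vtm_prefix_balance (hlam : 5 ≤ lam) (hx : IsFixedPointOf (vtmLamMorphism lam) 0 x) (m : ℕ) :
    parikh x 0 m lam ≤ parikh x 0 m 0 ∧ parikh x 0 m 0 ≤ parikh x 0 m lam + 1 := by
  obtain ⟨n, h1, h2⟩ := vtm_cover lam x m
  rw [vtmL_succ] at h2
  have hm : m = vtmL lam x n + (m - vtmL lam x n) := by omega
  have hj : m - vtmL lam x n ≤ (vtmLamMorphism lam (x n)).length := by omega
  have hb := (vtm_block hlam hx n _ hj).1
  have he := vtm_eqL hlam hx n
  rw [hm, parikh_add, parikh_add]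
  simp only [Nat.zero_add] at *
  omega

lemma vtm_alphabet (hx : IsFixedPointOf (vtmLamMorphism lam) 0 x) (m : ℕ) :
    x m = 0 ∨ x m = 1 ∨ x m = lam := by
  obtain ⟨n, h1, h2⟩ := vtm_cover lam x m
  rw [vtmL_succ] at h2
  have hm : m = vtmL lam x n + (m - vtmL lam x n) := by omega
  have hj : m - vtmL lam x n < (vtmLamMorphism lam (x n)).length := by omega
  rw [hm, vtm_letter hx n _ hj]
  rcases (m - vtmL lam x n) with _|_|_|j <;>
    · by_cases h0 : x n = 0 <;> by_cases h1 : x n = 1 <;>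
        simp [vtmLamMorphism, h0, h1, List.getD]


lemma vtm_parikh_other (hx : IsFixedPointOf (vtmLamMorphism lam) 0 x) (i n a : ℕ)
    (h0 : a ≠ 0) (h1 : a ≠ 1) (hl : a ≠ lam) : parikh x i n a = 0 := by
  unfold parikh
  rw [Finset.card_eq_zero, Finset.filter_eq_empty_iff]
  intro j _
  rcases vtm_alphabet hx (i + j) with h | h | h <;> omega

lemma vtm_par_total (hlam : 5 ≤ lam) (hx : IsFixedPointOf (vtmLamMorphism lam) 0 x) (i n : ℕ) :
    parikh x i n 0 + parikh x i n 1 + parikh x i n lam = n := by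
  induction n with
  | zero => simp [parikh_zero]
  | succ n ih =>
    rcases vtm_alphabet hx (i + n) with h | h | h <;>
      simp [parikh_succ, h, show lam ≠ 0 by omega, show lam ≠ 1 by omega,
        show (0:ℕ) ≠ lam by omega, show (1:ℕ) ≠ lam by omega,
        show (1:ℕ) ≠ 0 by omega, show (0:ℕ) ≠ 1 by omega] <;> omega

lemma vtm_blockSum (hlam : 5 ≤ lam) (hx : IsFixedPointOf (vtmLamMorphism lam) 0 x) (i n : ℕ) :
    blockSum x i n = parikh x i n 1 + lam * parikh x i n lam := by
  induction n with
  | zero => simp [blockSum, parikh_zero]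
  | succ n ih =>
    rw [blockSum, Finset.sum_range_succ, ← blockSum, ih]
    rcases vtm_alphabet hx (i + n) with h | h | h <;>
      rw [parikh_succ, parikh_succ, h] <;>
      simp [show lam ≠ 0 by omega, show lam ≠ 1 by omega,
        show (0:ℕ) ≠ lam by omega, show (1:ℕ) ≠ lam by omega,
        show (1:ℕ) ≠ 0 by omega, show (0:ℕ) ≠ 1 by omega, Nat.mul_succ] <;> ring

lemma vtm_factor_balance (hlam : 5 ≤ lam) (hx : IsFixedPointOf (vtmLamMorphism lam) 0 x) (i n : ℕ) :
    parikh x i n lam ≤ parikh x i n 0 + 1 ∧ parikh x i n 0 ≤ parikh x i n lam + 1 := by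
  have h1 := vtm_prefix_balance hlam hx i
  have h2 := vtm_prefix_balance hlam hx (i + n)
  have e0 := parikh_add x 0 i n 0
  have el := parikh_add x 0 i n lam
  simp only [Nat.zero_add] at e0 el
  omega

lemma vtm_arith (lam p0 p1 pl p0' p1' pl' n : ℕ) (hlam : 5 ≤ lam)
    (ht : p0 + p1 + pl = n) (ht' : p0' + p1' + pl' = n)
    (hb1 : pl ≤ p0 + 1) (hb2 : p0 ≤ pl + 1)
    (hb1' : pl' ≤ p0' + 1) (hb2' : p0' ≤ pl' + 1)
    (hle : pl ≤ pl')
    (hs : p1 + lam * pl = p1' + lam * pl') : p1 = p1' ∧ pl = pl' := by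
  obtain ⟨d, hd⟩ := Nat.exists_eq_add_of_le hle
  have h5 : 5 * d ≤ lam * d := Nat.mul_le_mul_right _ hlam
  have hmul : lam * pl' = lam * pl + lam * d := by rw [hd, Nat.mul_add]
  have himp : d = 0 → lam * d = 0 := by intro h; simp [h]
  generalize lam * pl = M at hs hmul
  generalize lam * d = E at hmul h5 himp
  generalize lam * pl' = M' at hs hmul
  omega

theorem vtm_lambda_add_eq_ab' (lam : ℕ) (hlam : 5 ≤ lam) (x : ℕ → ℕ)
    (hx : IsFixedPointOf (vtmLamMorphism lam) 0 x) :
    ∀ n : ℕ, Set.ncard {s : ℕ | ∃ i : ℕ, blockSum x i n = s}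
      = Set.ncard {P : ℕ → ℕ | ∃ i : ℕ, parikh x i n = P} := by
  intro n
  have hset : {s : ℕ | ∃ i : ℕ, blockSum x i n = s}
      = (fun P : ℕ → ℕ => P 1 + lam * P lam) '' {P : ℕ → ℕ | ∃ i : ℕ, parikh x i n = P} := by
    ext s
    constructor
    · rintro ⟨i, rfl⟩
      exact ⟨parikh x i n, ⟨i, rfl⟩, (vtm_blockSum hlam hx i n).symm⟩
    · rintro ⟨P, ⟨i, rfl⟩, rfl⟩
      exact ⟨i, vtm_blockSum hlam hx i n⟩
  rw [hset]
  apply Set.ncard_image_of_injOn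
  rintro P ⟨i, rfl⟩ P' ⟨i', rfl⟩ hPP
  simp only at hPP
  have ht := vtm_par_total hlam hx i n
  have ht' := vtm_par_total hlam hx i' n
  have hb := vtm_factor_balance hlam hx i n
  have hb' := vtm_factor_balance hlam hx i' n
  have key : parikh x i n 1 = parikh x i' n 1 ∧ parikh x i n lam = parikh x i' n lam := by
    rcases le_total (parikh x i n lam) (parikh x i' n lam) with h | h
    · exact vtm_arith lam _ _ _ _ _ _ n hlam ht ht' hb.1 hb.2 hb'.1 hb'.2 h hPP
    · have := vtm_arith lam _ _ _ _ _ _ n hlam ht' ht hb'.1 hb'.2 hb.1 hb.2 h hPP.symm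
      exact ⟨this.1.symm, this.2.symm⟩
  funext a
  by_cases ha0 : a = 0
  · subst ha0; omega
  · by_cases ha1 : a = 1
    · subst ha1; exact key.1
    · by_cases hal : a = lam
      · subst hal; exact key.2
      · rw [vtm_parikh_other hx i n a ha0 ha1 hal, vtm_parikh_other hx i' n a ha0 ha1 hal]

end Main


/-- For λ ≥ 5, the additive and abelian complexities of the fixed point of
0→01λ, 1→0λ, λ→1 coincide. -/
theorem vtm_lambda_add_eq_ab (lam : ℕ) (hlam : 5 ≤ lam) (x : ℕ → ℕ)
    (hx : IsFixedPointOf (vtmLamMorphism lam) 0 x) :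
    ∀ n : ℕ, addComplexity x n = abComplexity x n := by
  intro n
  exact vtm_lambda_add_eq_ab' lam hlam x hx n
end
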